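/- Let p be a prime and t a real number with |t| < p. Define S(t) = ∑_{n odd, n≥1} ζ(n+1) t^{n+1}/p^n, S̄(t) = ∑_{n odd, n≥3} ζ(n) t^{n−1}/p^n and B₁(t) = ∑_{n≥1} 1/(n(1 + t/p + n)). Then S(t) − p·t·S̄(t) = t ( −p/(t + p) + (1 + t/p) B₁(t) ). -/

import Mathlib

/-- `S(t) = ∑_{n odd, n ≥ 1} ζ(n+1) t^(n+1) / p^n` (sum over odd `n = 2k+1`). -/
noncomputable def S (p : ℕ) (t : ℝ) : ℝ :=
  ∑' k : ℕ, (riemannZeta (2 * k + 2)).re * t ^ (2 * k + 2) / (p : ℝ) ^ (2 * k + 1)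

/-- `S̄(t) = ∑_{n odd, n ≥ 3} ζ(n) t^(n-1) / p^n` (sum over odd `n = 2k+3`). -/
noncomputable def Sbar (p : ℕ) (t : ℝ) : ℝ :=
  ∑' k : ℕ, (riemannZeta (2 * k + 3)).re * t ^ (2 * k + 2) / (p : ℝ) ^ (2 * k + 3)

/-- `B₁(t) = ∑_{n ≥ 1} 1 / (n (1 + t/p + n))`. -/
noncomputable def B₁ (p : ℕ) (t : ℝ) : ℝ :=
  ∑' n : ℕ, 1 / (((n : ℝ) + 1) * (1 + t / p + ((n : ℝ) + 1)))

/-! Put `x = t / p`, so `|x| < 1`. Expanding `ζ(m) = ∑_{j ≥ 1} j⁻ᵐ` gives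
`S(t) - p t S̄(t) = p ∑_k ∑_j ((x/j)^(2k+2) - (x/j)^(2k+3))`. The double series converges
absolutely, so the sums may be swapped, and the inner geometric series is
`(x/j)² / (1 + x/j) = x² / (j (j + x))`. With `f(a) = ∑_j a / (j (j + a)) = ψ(1 + a) + γ` the
left side is `p x f(x)`, while `(1 + x) B₁(t) = f(1 + x)`; the identity is then the
functional equation `f(1 + x) - f(x) = 1 / (1 + x)`, a telescoping sum. -/

open Filter Topology Function

lemma hasSum_sub_succ_of_antitone {f : ℕ → ℝ} {l : ℝ} (hf : Antitone f)
    (hl : Tendsto f atTop (𝓝 l)) : HasSum (fun n => f n - f (n + 1)) (f 0 - l) := by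
  rw [hasSum_iff_tendsto_nat_of_nonneg fun n => sub_nonneg.2 (hf n.le_succ)]
  simp only [Finset.sum_range_sub']
  exact tendsto_const_nhds.sub (hl.comp (tendsto_add_atTop_nat 0))

lemma summable_one_div_nat_add_one_sq : Summable (fun j : ℕ => 1 / ((j : ℝ) + 1) ^ 2) := by
  exact_mod_cast (summable_nat_add_iff 1).2 (Real.summable_one_div_nat_pow.2 one_lt_two)

lemma riemannZeta_re_mul_pow {m : ℕ} (hm : 2 ≤ m) (x : ℝ) :
    (riemannZeta m).re * x ^ m = ∑' j : ℕ, (x / (j + 1)) ^ m := by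
  have hζ : riemannZeta m = ((∑' j : ℕ, 1 / ((j : ℝ) + 1) ^ m : ℝ) : ℂ) := by
    rw [zeta_eq_tsum_one_div_nat_add_one_cpow (by simp; omega), Complex.ofReal_tsum]
    push_cast
    simp_rw [Complex.cpow_natCast]
  rw [hζ, Complex.ofReal_re, ← tsum_mul_right]
  exact tsum_congr fun j => by rw [div_pow]; ring

lemma summable_uncurry_div_pow {x : ℝ} (hx : |x| < 1) {c : ℕ} (hc : 2 ≤ c) :
    Summable (uncurry fun k j : ℕ => (x / (j + 1)) ^ (2 * k + c)) := by
  have hgeom : Summable (fun k : ℕ => |x| ^ (2 * k)) := by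
    simpa only [pow_mul] using summable_geometric_of_lt_one (sq_nonneg _)
      (pow_lt_one₀ (abs_nonneg x) hx two_ne_zero)
  refine Summable.of_norm_bounded
    (hgeom.mul_of_nonneg summable_one_div_nat_add_one_sq (fun _ => by positivity)
      (fun _ => by positivity)) fun ⟨k, j⟩ => ?_
  have hj : (1 : ℝ) ≤ j + 1 := by simp
  have habs : |x / (j + 1)| = |x| / (j + 1) := by
    rw [abs_div, abs_of_pos (zero_lt_one.trans_le hj)]
  have hy : |x / (j + 1)| ≤ |x| := habs ▸ div_le_self (abs_nonneg x) hj
  have hy' : |x / (j + 1)| ≤ 1 / (j + 1) := habs ▸ by gcongr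
  calc ‖(x / (j + 1)) ^ (2 * k + c)‖ = |x / (j + 1)| ^ (2 * k) * |x / (j + 1)| ^ c := by
        rw [Real.norm_eq_abs, abs_pow, pow_add]
    _ ≤ |x| ^ (2 * k) * |x / (j + 1)| ^ 2 := by
        gcongr 1
        exacts [pow_le_pow_left₀ (abs_nonneg _) hy _,
          pow_le_pow_of_le_one (abs_nonneg _) (hy.trans hx.le) hc]
    _ ≤ |x| ^ (2 * k) * (1 / ((j : ℝ) + 1) ^ 2) := by
        rw [← one_div_pow]; gcongr

lemma tsum_pow_even_sub_pow_odd {y : ℝ} (hy : |y| < 1) :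
    ∑' k : ℕ, (y ^ (2 * k + 2) - y ^ (2 * k + 3)) = y ^ 2 / (1 + y) := by
  obtain ⟨hy₁, hy₂⟩ := abs_lt.1 hy
  have hy2 : |y ^ 2| < 1 := by rw [abs_pow]; exact pow_lt_one₀ (abs_nonneg y) hy two_ne_zero
  have hterm (k : ℕ) : y ^ (2 * k + 2) - y ^ (2 * k + 3) = (y ^ 2 - y ^ 3) * (y ^ 2) ^ k := by
    ring
  rw [tsum_congr hterm, tsum_mul_left, tsum_geometric_of_abs_lt_one hy2]
  have h₁ : (1 : ℝ) + y ≠ 0 := by linarith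
  have h₂ : (1 : ℝ) - y ≠ 0 := by linarith
  rw [show (1 : ℝ) - y ^ 2 = (1 - y) * (1 + y) by ring]
  field_simp

lemma tsum_tsum_div_pow_even_sub_odd {x : ℝ} (hx : |x| < 1) :
    ∑' k : ℕ, ∑' j : ℕ, (x / (j + 1)) ^ (2 * k + 2) -
        ∑' k : ℕ, ∑' j : ℕ, (x / (j + 1)) ^ (2 * k + 3) =
      ∑' j : ℕ, x ^ 2 / ((j + 1) * (j + 1 + x)) := by
  have hU := summable_uncurry_div_pow hx (le_refl 2)
  have hV := summable_uncurry_div_pow hx (by norm_num : 2 ≤ 3)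
  have hU' : Summable fun k : ℕ => ∑' j : ℕ, (x / (j + 1)) ^ (2 * k + 2) := hU.prod
  have hV' : Summable fun k : ℕ => ∑' j : ℕ, (x / (j + 1)) ^ (2 * k + 3) := hV.prod
  have hUk (k : ℕ) : Summable fun j : ℕ => (x / (j + 1)) ^ (2 * k + 2) := hU.prod_factor k
  have hVk (k : ℕ) : Summable fun j : ℕ => (x / (j + 1)) ^ (2 * k + 3) := hV.prod_factor k
  rw [← hU'.tsum_sub hV', tsum_congr fun k => ((hUk k).tsum_sub (hVk k)).symm,
    ← Summable.tsum_comm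
      (f := fun k j : ℕ => (x / (j + 1)) ^ (2 * k + 2) - (x / (j + 1)) ^ (2 * k + 3)) (hU.sub hV)]
  refine tsum_congr fun j => ?_
  have hj : (0 : ℝ) < j + 1 := by positivity
  have hy : |x / (j + 1)| < 1 := by
    rw [abs_div, abs_of_pos hj, div_lt_one hj]
    linarith [abs_lt.1 hx]
  rw [tsum_pow_even_sub_pow_odd hy]
  have : (j : ℝ) + 1 + x ≠ 0 := by linarith [abs_lt.1 hx]
  field_simp

lemma hasSum_one_div_add_sub_one_div_add {a : ℝ} (ha : -1 < a) :
    HasSum (fun j : ℕ => 1 / ((j : ℝ) + 1 + a) - 1 / ((j : ℝ) + 2 + a)) (1 / (1 + a)) := by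
  have hpos (j : ℕ) : (0 : ℝ) < j + 1 + a := by
    have : (0 : ℝ) ≤ j := j.cast_nonneg
    linarith
  have hanti : Antitone fun j : ℕ => 1 / ((j : ℝ) + 1 + a) :=
    fun m n hmn => one_div_le_one_div_of_le (hpos m) (by gcongr)
  have hlim : Tendsto (fun j : ℕ => 1 / ((j : ℝ) + 1 + a)) atTop (𝓝 0) := by
    simp only [one_div]
    exact tendsto_inv_atTop_zero.comp (tendsto_atTop_add_const_right _ _
      (tendsto_atTop_add_const_right _ _ tendsto_natCast_atTop_atTop))
  convert hasSum_sub_succ_of_antitone hanti hlim using 2 with j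
  · push_cast; ring_nf
  · simp

lemma summable_one_div_mul_add {a : ℝ} (ha : -1 < a) :
    Summable (fun j : ℕ => 1 / (((j : ℝ) + 1) * (1 + a + (j + 1)))) := by
  refine summable_one_div_nat_add_one_sq.of_nonneg_of_le (fun j => ?_) fun j => ?_
  · have : (0 : ℝ) ≤ j := j.cast_nonneg
    exact one_div_nonneg.2 (mul_nonneg (by linarith) (by linarith))
  · have : (0 : ℝ) ≤ j := j.cast_nonneg
    rw [sq]
    exact one_div_le_one_div_of_le (by positivity)
      (mul_le_mul_of_nonneg_left (by linarith) (by positivity))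

lemma tsum_sq_div_mul_add {x : ℝ} (hx : -1 < x) :
    ∑' j : ℕ, x ^ 2 / ((j + 1) * (j + 1 + x)) =
      -x / (1 + x) + x * (1 + x) * ∑' j : ℕ, 1 / (((j : ℝ) + 1) * (1 + x + (j + 1))) := by
  have h := (((hasSum_one_div_add_sub_one_div_add hx).mul_left (-x)).add
    ((summable_one_div_mul_add hx).hasSum.mul_left (x * (1 + x)))).tsum_eq
  rw [div_eq_mul_one_div, ← h]
  refine tsum_congr fun j => ?_
  have : (0 : ℝ) ≤ j := j.cast_nonneg
  have h₁ : (j : ℝ) + 1 + x ≠ 0 := by linarith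
  have h₂ : (j : ℝ) + 2 + x ≠ 0 := by linarith
  have h₃ : 1 + x + ((j : ℝ) + 1) ≠ 0 := by linarith
  field_simp
  ring

theorem stmt6_general (p : ℕ) (t : ℝ) (ht : |t| < (p : ℝ)) :
    S p t - p * t * Sbar p t = t * (-(p : ℝ) / (t + (p : ℝ)) + (1 + t / p) * B₁ p t) := by
  have hp : (0 : ℝ) < p := (abs_nonneg t).trans_lt ht
  have hx : |t / p| < 1 := by rwa [abs_div, abs_of_pos hp, div_lt_one hp]
  have hterm (n : ℕ) (hn : 1 ≤ n) : (riemannZeta (n + 1 : ℕ)).re * t ^ (n + 1) / p ^ n =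
      p * ∑' j : ℕ, (t / p / (j + 1)) ^ (n + 1) := by
    rw [← riemannZeta_re_mul_pow (by omega) (t / p), div_pow, pow_succ (p : ℝ) n]
    field_simp
  have hS : S p t = p * ∑' k : ℕ, ∑' j : ℕ, (t / p / (j + 1)) ^ (2 * k + 2) := by
    rw [S, ← tsum_mul_left]
    refine tsum_congr fun k => ?_
    rw [show 2 * (k : ℂ) + 2 = (2 * k + 1 + 1 : ℕ) by push_cast; ring]
    exact hterm (2 * k + 1) (by omega)
  have hSbar :
      p * t * Sbar p t = p * ∑' k : ℕ, ∑' j : ℕ, (t / p / (j + 1)) ^ (2 * k + 3) := by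
    rw [Sbar, ← tsum_mul_left, ← tsum_mul_left]
    refine tsum_congr fun k => ?_
    rw [show 2 * (k : ℂ) + 3 = (2 * k + 2 + 1 : ℕ) by push_cast; ring,
      ← hterm (2 * k + 2) (by omega), pow_succ (p : ℝ) (2 * k + 2), pow_succ t (2 * k + 2)]
    field_simp
  rw [hS, hSbar, ← mul_sub, tsum_tsum_div_pow_even_sub_odd hx,
    tsum_sq_div_mul_add (abs_lt.1 hx).1, B₁]
  generalize ∑' j : ℕ, 1 / (((j : ℝ) + 1) * (1 + t / p + (j + 1))) = B
  have : (p : ℝ) + t ≠ 0 := by linarith [abs_lt.1 ht]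
  have : t + p ≠ 0 := by linarith [abs_lt.1 ht]
  field_simp
  ring

theorem stmt6 (p : ℕ) (hp : p.Prime) (t : ℝ) (ht : |t| < (p : ℝ)) :
    S p t - p * t * Sbar p t = t * (-(p : ℝ) / (t + (p : ℝ)) + (1 + t / p) * B₁ p t) :=
  stmt6_general p t ht
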